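/- Suppose E, B : ℝ³ × ℝ → ℝ³ and ρ, and u satisfy the dual Maxwell equations ∇·B = 0, ∇·E = 4πρ, ∇×E = −(1/b)∂B/∂τ, ∇×B = (1/b)(∂E/∂τ + 4πρu), where b = b(τ) > 0 depends only on τ, with all fields smooth. Then B satisfies (1/b²)∂²B/∂τ² − (ḃ/b³)∂B/∂τ − ∇²B = (4π/b)∇×(ρu), where ḃ = db/dτ. -/

import Mathlib

noncomputable section

open scoped BigOperators

local notation "V3" => EuclideanSpace ℝ (Fin 3)

/-- `i`-th component of a vector field. -/
def vcomp (F : V3 → V3) (i : Fin 3) (x : V3) : ℝ := F x i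

/-- Partial derivative in the `i`-th coordinate direction. -/
def pderiv3 (i : Fin 3) (f : V3 → ℝ) : V3 → ℝ :=
  fun x => fderiv ℝ f x (EuclideanSpace.single i 1)

/-- Divergence of a vector field on `ℝ³`. -/
def div3 (F : V3 → V3) (x : V3) : ℝ := ∑ i, pderiv3 i (vcomp F i) x

/-- Curl of a vector field on `ℝ³`. -/
def curl3 (F : V3 → V3) (x : V3) : V3 :=
  (WithLp.equiv 2 (Fin 3 → ℝ)).symm
    ![pderiv3 1 (vcomp F 2) x - pderiv3 2 (vcomp F 1) x,
      pderiv3 2 (vcomp F 0) x - pderiv3 0 (vcomp F 2) x,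
      pderiv3 0 (vcomp F 1) x - pderiv3 1 (vcomp F 0) x]

/-- Componentwise (vector) Laplacian on `ℝ³`. -/
def vlap3 (F : V3 → V3) (x : V3) : V3 :=
  (WithLp.equiv 2 (Fin 3 → ℝ)).symm
    (fun i => ∑ j, pderiv3 j (pderiv3 j (vcomp F i)) x)


section Aux

local notation "P" => (EuclideanSpace ℝ (Fin 3)) × ℝ

lemma fd_smooth {g : P → ℝ} (hg : ContDiff ℝ (⊤ : ℕ∞) g) (v : P) :
    ContDiff ℝ (⊤ : ℕ∞) (fun p => fderiv ℝ g p v) :=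
  (hg.fderiv_right (by simp)).clm_apply contDiff_const

lemma Dswap {g : P → ℝ} (hg : ContDiff ℝ (⊤ : ℕ∞) g) (v w : P) (p : P) :
    fderiv ℝ (fun q => fderiv ℝ g q v) p w = fderiv ℝ (fun q => fderiv ℝ g q w) p v := by
  have hd : Differentiable ℝ g := hg.differentiable (by simp)
  have hd2 : DifferentiableAt ℝ (fderiv ℝ g) p :=
    ((hg.fderiv_right (m := (⊤ : ℕ∞)) (by simp)).differentiable (by simp)).differentiableAt
  have h1 : ∀ u : P, fderiv ℝ (fun q => fderiv ℝ g q u) p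
      = (fderiv ℝ (fderiv ℝ g) p).flip u := by
    intro u
    have := fderiv_clm_apply (x := p) (c := fderiv ℝ g) (u := fun _ => u) hd2
      (differentiableAt_const u)
    simpa [fderiv_const] using this
  rw [h1, h1]
  exact second_derivative_symmetric (fun y => (hd y).hasFDerivAt) hd2.hasFDerivAt w v

lemma master (b : ℝ → ℝ) (hb : ∀ t, 0 < b t) (hbdiff : Differentiable ℝ b)
    (vi vj vk vt : P) (hvj : vj.2 = 0) (hvk : vk.2 = 0) (hvt : vt.2 = 1)
    (Bi Bj Bk Ej Ek Gj Gk : P → ℝ)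
    (hBi : ContDiff ℝ (⊤ : ℕ∞) Bi) (hBj : ContDiff ℝ (⊤ : ℕ∞) Bj) (hBk : ContDiff ℝ (⊤ : ℕ∞) Bk)
    (hEj : ContDiff ℝ (⊤ : ℕ∞) Ej) (hEk : ContDiff ℝ (⊤ : ℕ∞) Ek)
    (hGj : Differentiable ℝ Gj) (hGk : Differentiable ℝ Gk)
    (h1 : ∀ p : P, fderiv ℝ Ek p vj - fderiv ℝ Ej p vk = -(1 / b p.2) * fderiv ℝ Bi p vt)
    (h2 : ∀ p : P, fderiv ℝ Bj p vi - fderiv ℝ Bi p vj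
        = (1 / b p.2) * (fderiv ℝ Ek p vt + 4 * Real.pi * Gk p))
    (h3 : ∀ p : P, fderiv ℝ Bi p vk - fderiv ℝ Bk p vi
        = (1 / b p.2) * (fderiv ℝ Ej p vt + 4 * Real.pi * Gj p))
    (h4 : ∀ p : P, fderiv ℝ Bi p vi + fderiv ℝ Bj p vj + fderiv ℝ Bk p vk = 0)
    (p : P) :
    (1 / (b p.2) ^ 2) * fderiv ℝ (fun q => fderiv ℝ Bi q vt) p vt
      - (deriv b p.2 / (b p.2) ^ 3) * fderiv ℝ Bi p vt
      - (fderiv ℝ (fun q => fderiv ℝ Bi q vi) p vi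
          + fderiv ℝ (fun q => fderiv ℝ Bi q vj) p vj
          + fderiv ℝ (fun q => fderiv ℝ Bi q vk) p vk)
    = (4 * Real.pi / b p.2) * (fderiv ℝ Gk p vj - fderiv ℝ Gj p vk) := by
  have hbne : ∀ t, b t ≠ 0 := fun t => (hb t).ne'
  -- derivative of the coefficient 1 / b q.2
  have hder : ∀ t, HasDerivAt (fun t => 1 / b t) (-deriv b t / b t ^ 2) t := by
    intro t
    simpa [one_div, Pi.inv_def] using ((hbdiff t).hasDerivAt.inv (hbne t))
  have hcD : ∀ q : P, HasFDerivAt (fun q : P => 1 / b q.2)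
      (((1 : ℝ →L[ℝ] ℝ).smulRight (-deriv b q.2 / b q.2 ^ 2)).comp
        (ContinuousLinearMap.snd ℝ V3 ℝ)) q := by
    intro q
    exact (hder q.2).hasFDerivAt.comp q hasFDerivAt_snd
  have hcdiff : ∀ q : P, DifferentiableAt ℝ (fun q : P => 1 / b q.2) q :=
    fun q => (hcD q).differentiableAt
  have hcval : ∀ (q v : P),
      fderiv ℝ (fun q : P => 1 / b q.2) q v = v.2 * (-deriv b q.2 / b q.2 ^ 2) := by
    intro q v; rw [(hcD q).fderiv]; simp [smul_eq_mul]
  -- product rule helper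
  have prod_rule : ∀ (h : P → ℝ), DifferentiableAt ℝ h p → ∀ v : P,
      fderiv ℝ (fun q => (1 / b q.2) * h q) p v
        = v.2 * (-deriv b p.2 / b p.2 ^ 2) * h p + (1 / b p.2) * fderiv ℝ h p v := by
    intro h hh v
    rw [fderiv_fun_mul (hcdiff p) hh]
    simp only [ContinuousLinearMap.add_apply, ContinuousLinearMap.smul_apply, smul_eq_mul,
      hcval p v]
    ring
  -- differentiability of first derivatives
  have dBi : ∀ v : P, Differentiable ℝ (fun q => fderiv ℝ Bi q v) :=
    fun v => (fd_smooth hBi v).differentiable (by simp)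
  have dBj : ∀ v : P, Differentiable ℝ (fun q => fderiv ℝ Bj q v) :=
    fun v => (fd_smooth hBj v).differentiable (by simp)
  have dBk : ∀ v : P, Differentiable ℝ (fun q => fderiv ℝ Bk q v) :=
    fun v => (fd_smooth hBk v).differentiable (by simp)
  have dEj : ∀ v : P, Differentiable ℝ (fun q => fderiv ℝ Ej q v) :=
    fun v => (fd_smooth hEj v).differentiable (by simp)
  have dEk : ∀ v : P, Differentiable ℝ (fun q => fderiv ℝ Ek q v) :=
    fun v => (fd_smooth hEk v).differentiable (by simp)
  -- differentiate h4 in direction vi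
  have e4 : fderiv ℝ (fun q => fderiv ℝ Bi q vi) p vi
      + fderiv ℝ (fun q => fderiv ℝ Bj q vj) p vi
      + fderiv ℝ (fun q => fderiv ℝ Bk q vk) p vi = 0 := by
    have h0 : fderiv ℝ (fun q => fderiv ℝ Bi q vi + fderiv ℝ Bj q vj + fderiv ℝ Bk q vk) p vi
        = fderiv ℝ (fun _ : P => (0 : ℝ)) p vi := by rw [funext h4]
    rw [fderiv_fun_add (f := fun q => fderiv ℝ Bi q vi + fderiv ℝ Bj q vj) ((dBi vi p).add (dBj vj p)) (dBk vk p),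
        fderiv_fun_add (dBi vi p) (dBj vj p), fderiv_const_apply] at h0
    simpa using h0
  -- differentiate h2 in direction vj
  have e2 : fderiv ℝ (fun q => fderiv ℝ Bj q vi) p vj
      - fderiv ℝ (fun q => fderiv ℝ Bi q vj) p vj
      = (1 / b p.2) * (fderiv ℝ (fun q => fderiv ℝ Ek q vt) p vj
          + 4 * Real.pi * fderiv ℝ Gk p vj) := by
    have hsum : DifferentiableAt ℝ (fun q => fderiv ℝ Ek q vt + 4 * Real.pi * Gk q) p :=
      (dEk vt p).add ((hGk p).const_mul _)
    have h0 : fderiv ℝ (fun q => fderiv ℝ Bj q vi - fderiv ℝ Bi q vj) p vj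
        = fderiv ℝ (fun q => (1 / b q.2) * (fderiv ℝ Ek q vt + 4 * Real.pi * Gk q)) p vj := by
      rw [funext h2]
    rw [fderiv_fun_sub (dBj vi p) (dBi vj p), prod_rule _ hsum vj,
        fderiv_fun_add (dEk vt p) ((hGk p).const_mul _), fderiv_const_mul (hGk p)] at h0
    simpa [hvj] using h0
  -- differentiate h3 in direction vk
  have e3 : fderiv ℝ (fun q => fderiv ℝ Bi q vk) p vk
      - fderiv ℝ (fun q => fderiv ℝ Bk q vi) p vk
      = (1 / b p.2) * (fderiv ℝ (fun q => fderiv ℝ Ej q vt) p vk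
          + 4 * Real.pi * fderiv ℝ Gj p vk) := by
    have hsum : DifferentiableAt ℝ (fun q => fderiv ℝ Ej q vt + 4 * Real.pi * Gj q) p :=
      (dEj vt p).add ((hGj p).const_mul _)
    have h0 : fderiv ℝ (fun q => fderiv ℝ Bi q vk - fderiv ℝ Bk q vi) p vk
        = fderiv ℝ (fun q => (1 / b q.2) * (fderiv ℝ Ej q vt + 4 * Real.pi * Gj q)) p vk := by
      rw [funext h3]
    rw [fderiv_fun_sub (dBi vk p) (dBk vi p), prod_rule _ hsum vk,
        fderiv_fun_add (dEj vt p) ((hGj p).const_mul _), fderiv_const_mul (hGj p)] at h0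
    simpa [hvk] using h0
  -- differentiate h1 in direction vt
  have e1 : fderiv ℝ (fun q => fderiv ℝ Ek q vj) p vt
      - fderiv ℝ (fun q => fderiv ℝ Ej q vk) p vt
      = (deriv b p.2 / b p.2 ^ 2) * fderiv ℝ Bi p vt
        - (1 / b p.2) * fderiv ℝ (fun q => fderiv ℝ Bi q vt) p vt := by
    have h0 : fderiv ℝ (fun q => fderiv ℝ Ek q vj - fderiv ℝ Ej q vk) p vt
        = fderiv ℝ (fun q => -((1 / b q.2) * fderiv ℝ Bi q vt)) p vt := by
      have : (fun q : P => fderiv ℝ Ek q vj - fderiv ℝ Ej q vk)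
          = (fun q => -((1 / b q.2) * fderiv ℝ Bi q vt)) := by
        funext q; rw [h1 q]; ring
      rw [this]
    rw [fderiv_fun_sub (dEk vj p) (dEj vk p), fderiv_fun_neg] at h0
    simp only [ContinuousLinearMap.sub_apply, ContinuousLinearMap.neg_apply] at h0
    rw [prod_rule _ (dBi vt p) vt] at h0
    rw [h0, hvt]
    ring
  -- Clairaut swaps
  rw [Dswap hBj vi vj p, Dswap hEk vt vj p] at e2
  rw [Dswap hBk vi vk p, Dswap hEj vt vk p] at e3
  have comb : -(fderiv ℝ (fun q => fderiv ℝ Bi q vi) p vi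
        + fderiv ℝ (fun q => fderiv ℝ Bi q vj) p vj
        + fderiv ℝ (fun q => fderiv ℝ Bi q vk) p vk)
      = (1 / b p.2) * (fderiv ℝ (fun q => fderiv ℝ Ek q vj) p vt
          - fderiv ℝ (fun q => fderiv ℝ Ej q vk) p vt)
        + (1 / b p.2) * (4 * Real.pi * (fderiv ℝ Gk p vj - fderiv ℝ Gj p vk)) := by
    linear_combination e2 - e3 - e4
  rw [e1] at comb
  have hb2 : b p.2 ≠ 0 := hbne p.2
  have hx : (1 / b p.2) * ((deriv b p.2 / b p.2 ^ 2) * fderiv ℝ Bi p vt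
        - (1 / b p.2) * fderiv ℝ (fun q => fderiv ℝ Bi q vt) p vt)
      + (1 / b p.2) * (4 * Real.pi * (fderiv ℝ Gk p vj - fderiv ℝ Gj p vk))
      = (deriv b p.2 / b p.2 ^ 3) * fderiv ℝ Bi p vt
        - (1 / b p.2 ^ 2) * fderiv ℝ (fun q => fderiv ℝ Bi q vt) p vt
        + (4 * Real.pi / b p.2) * (fderiv ℝ Gk p vj - fderiv ℝ Gj p vk) := by
    field_simp
  rw [hx] at comb
  linarith [comb]

lemma pd_slice {W : Type*} [NormedAddCommGroup W] [NormedSpace ℝ W]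
    {g : P → W} (hg : Differentiable ℝ g) (i : Fin 3) (x : V3) (τ : ℝ) :
    fderiv ℝ (fun y => g (y, τ)) x (EuclideanSpace.single i 1)
      = fderiv ℝ g (x, τ) (EuclideanSpace.single i 1, 0) := by
  have hinc : HasFDerivAt (fun y : V3 => (y, τ)) (ContinuousLinearMap.inl ℝ V3 ℝ) x :=
    hasFDerivAt_prodMk_left x τ
  have h := ((hg (x, τ)).hasFDerivAt.comp x hinc).fderiv
  simp only [Function.comp_def] at h
  rw [h]; rfl

lemma dt_slice {W : Type*} [NormedAddCommGroup W] [NormedSpace ℝ W]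
    {g : P → W} (hg : Differentiable ℝ g) (x : V3) (τ : ℝ) :
    deriv (fun s => g (x, s)) τ = fderiv ℝ g (x, τ) (0, 1) := by
  have hinc : HasFDerivAt (fun s : ℝ => (x, s)) (ContinuousLinearMap.inr ℝ V3 ℝ) τ :=
    hasFDerivAt_prodMk_right x τ
  have h := ((hg (x, τ)).hasFDerivAt.comp τ hinc).hasDerivAt
  simpa [Function.comp_def] using h.deriv

lemma fd_smoothV {W : Type*} [NormedAddCommGroup W] [NormedSpace ℝ W]
    {g : P → W} (hg : ContDiff ℝ (⊤ : ℕ∞) g) (v : P) :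
    ContDiff ℝ (⊤ : ℕ∞) (fun p => fderiv ℝ g p v) :=
  (hg.fderiv_right (by simp)).clm_apply contDiff_const

lemma deriv_proj (F : ℝ → V3) {s : ℝ} (hF : DifferentiableAt ℝ F s) (i : Fin 3) :
    deriv (fun t => F t i) s = deriv F s i :=
  (((EuclideanSpace.proj (𝕜 := ℝ) i).hasFDerivAt.comp_hasDerivAt s hF.hasDerivAt)).deriv

lemma fderiv_proj (G : P → V3) (hG : Differentiable ℝ G) (q v : P) (i : Fin 3) :
    fderiv ℝ (fun p => G p i) q v = fderiv ℝ G q v i := by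
  have h := ((EuclideanSpace.proj (𝕜 := ℝ) i).hasFDerivAt.comp q (hG q).hasFDerivAt).fderiv
  have h2 : fderiv ℝ (fun p => G p i) q
      = (EuclideanSpace.proj (𝕜 := ℝ) i).comp (fderiv ℝ G q) := h
  rw [h2]; rfl

end Aux

/-- If `E, B, ρ, u` satisfy the dual (proper-time) Maxwell equations with scale
factor `b(τ) > 0`, then `B` satisfies the dissipative wave equation
`(1/b²)∂²B/∂τ² − (ḃ/b³)∂B/∂τ − ∇²B = (4π/b)∇×(ρu)`. -/
theorem stmt_17 (c : ℝ) (hc : 0 < c)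
    (E B : V3 → ℝ → V3) (ρ : V3 → ℝ → ℝ) (u : ℝ → V3) (b : ℝ → ℝ)
    (hb : ∀ τ, 0 < b τ) (hbdiff : Differentiable ℝ b)
    (hEsmooth : ContDiff ℝ (⊤ : ℕ∞) fun p : V3 × ℝ => E p.1 p.2)
    (hBsmooth : ContDiff ℝ (⊤ : ℕ∞) fun p : V3 × ℝ => B p.1 p.2)
    (hρsmooth : ContDiff ℝ (⊤ : ℕ∞) fun p : V3 × ℝ => ρ p.1 p.2)
    (husmooth : ContDiff ℝ (⊤ : ℕ∞) u)
    (hdivB : ∀ x τ, div3 (fun y => B y τ) x = 0)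
    (hdivE : ∀ x τ, div3 (fun y => E y τ) x = 4 * Real.pi * ρ x τ)
    (hcurlE : ∀ x τ, curl3 (fun y => E y τ) x
        = -(1 / b τ) • deriv (fun s => B x s) τ)
    (hcurlB : ∀ x τ, curl3 (fun y => B y τ) x
        = (1 / b τ) • (deriv (fun s => E x s) τ + (4 * Real.pi * ρ x τ) • u τ)) :
    ∀ x τ,
      (1 / (b τ) ^ 2) • deriv (fun s => deriv (fun s' => B x s') s) τ
          - (deriv b τ / (b τ) ^ 3) • deriv (fun s => B x s) τ
          - vlap3 (fun y => B y τ) x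
        = (4 * Real.pi / b τ) • curl3 (fun y => ρ y τ • u τ) x := by
  intro x τ
  have hBc : ∀ i : Fin 3, ContDiff ℝ (⊤ : ℕ∞) (fun q : V3 × ℝ => B q.1 q.2 i) :=
    fun i => (EuclideanSpace.proj (𝕜 := ℝ) i).contDiff.comp hBsmooth
  have hEc : ∀ i : Fin 3, ContDiff ℝ (⊤ : ℕ∞) (fun q : V3 × ℝ => E q.1 q.2 i) :=
    fun i => (EuclideanSpace.proj (𝕜 := ℝ) i).contDiff.comp hEsmooth
  have hGc : ∀ i : Fin 3, Differentiable ℝ (fun q : V3 × ℝ => ρ q.1 q.2 * u q.2 i) :=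
    fun i => (hρsmooth.differentiable (by simp)).mul
      ((EuclideanSpace.proj (𝕜 := ℝ) i).differentiable.comp
        ((husmooth.differentiable (by simp)).comp differentiable_snd))
  have hBBd : Differentiable ℝ (fun p : V3 × ℝ => B p.1 p.2) := hBsmooth.differentiable (by simp)
  have hEEd : Differentiable ℝ (fun p : V3 × ℝ => E p.1 p.2) := hEsmooth.differentiable (by simp)
  have hBslice : ∀ (y : V3), Differentiable ℝ (fun s' => B y s') :=
    fun y => by have := hBBd.comp ((differentiable_const y).prodMk differentiable_id); exact this
  have hEslice : ∀ (y : V3), Differentiable ℝ (fun s' => E y s') :=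
    fun y => by have := hEEd.comp ((differentiable_const y).prodMk differentiable_id); exact this
  -- time derivative of components
  have hderB : ∀ (y : V3) (s : ℝ) (i : Fin 3),
      deriv (fun s' => B y s') s i
        = fderiv ℝ (fun q : V3 × ℝ => B q.1 q.2 i) (y, s) (0, 1) := by
    intro y s i
    rw [← deriv_proj _ (hBslice y s) i]
    exact dt_slice ((hBc i).differentiable (by simp)) y s
  have hderE : ∀ (y : V3) (s : ℝ) (i : Fin 3),
      deriv (fun s' => E y s') s i
        = fderiv ℝ (fun q : V3 × ℝ => E q.1 q.2 i) (y, s) (0, 1) := by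
    intro y s i
    rw [← deriv_proj _ (hEslice y s) i]
    exact dt_slice ((hEc i).differentiable (by simp)) y s
  -- second time derivative of components
  have hfunB : (fun s => deriv (fun s' => B x s') s)
      = fun s => fderiv ℝ (fun p : V3 × ℝ => B p.1 p.2) (x, s) (0, 1) := by
    funext s; exact dt_slice hBBd x s
  have hder2 : ∀ i : Fin 3, deriv (fun s => deriv (fun s' => B x s') s) τ i
      = fderiv ℝ (fun q => fderiv ℝ (fun q' : V3 × ℝ => B q'.1 q'.2 i) q (0, 1)) (x, τ) (0, 1) := by
    intro i
    rw [hfunB]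
    have hdat : DifferentiableAt ℝ
        (fun s => fderiv ℝ (fun p : V3 × ℝ => B p.1 p.2) (x, s) ((0 : V3), (1 : ℝ))) τ :=
      (((fd_smoothV hBsmooth (0, 1)).differentiable (by simp)).comp
        ((differentiable_const x).prodMk differentiable_id)) τ
    rw [← deriv_proj _ hdat i]
    have hcomp : (fun t => fderiv ℝ (fun p : V3 × ℝ => B p.1 p.2) (x, t) ((0 : V3), (1 : ℝ)) i)
        = fun t => fderiv ℝ (fun q' : V3 × ℝ => B q'.1 q'.2 i) (x, t) (0, 1) := by
      funext t
      exact (fderiv_proj _ hBBd (x, t) (0, 1) i).symm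
    rw [hcomp]
    exact dt_slice ((fd_smoothV (hBc i) (0, 1)).differentiable (by simp)) x τ
  -- spatial partial derivatives of components
  have pdB : ∀ (a m : Fin 3) (y : V3) (s : ℝ),
      pderiv3 m (vcomp (fun y' => B y' s) a) y
        = fderiv ℝ (fun q : V3 × ℝ => B q.1 q.2 a) (y, s) (EuclideanSpace.single m 1, 0) :=
    fun a m y s => pd_slice ((hBc a).differentiable (by simp)) m y s
  have pdE : ∀ (a m : Fin 3) (y : V3) (s : ℝ),
      pderiv3 m (vcomp (fun y' => E y' s) a) y
        = fderiv ℝ (fun q : V3 × ℝ => E q.1 q.2 a) (y, s) (EuclideanSpace.single m 1, 0) :=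
    fun a m y s => pd_slice ((hEc a).differentiable (by simp)) m y s
  have pdG : ∀ (a m : Fin 3) (y : V3),
      pderiv3 m (vcomp (fun y' => ρ y' τ • u τ) a) y
        = fderiv ℝ (fun q : V3 × ℝ => ρ q.1 q.2 * u q.2 a) (y, τ) (EuclideanSpace.single m 1, 0) :=
    fun a m y => pd_slice (hGc a) m y τ
  have pd2B : ∀ (a m : Fin 3),
      pderiv3 m (pderiv3 m (vcomp (fun y' => B y' τ) a)) x
        = fderiv ℝ (fun q => fderiv ℝ (fun q' : V3 × ℝ => B q'.1 q'.2 a) q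
            (EuclideanSpace.single m 1, 0)) (x, τ) (EuclideanSpace.single m 1, 0) := by
    intro a m
    have h1 : pderiv3 m (vcomp (fun y' => B y' τ) a)
        = fun y => fderiv ℝ (fun q' : V3 × ℝ => B q'.1 q'.2 a) (y, τ)
            (EuclideanSpace.single m 1, 0) :=
      funext fun y => pdB a m y τ
    rw [h1]
    exact pd_slice ((fd_smoothV (hBc a) _).differentiable (by simp)) m x τ
  -- converted Maxwell equations, curl E components
  have HE0 : ∀ (y : V3) (s : ℝ),
      fderiv ℝ (fun q : V3 × ℝ => E q.1 q.2 2) (y, s) (EuclideanSpace.single 1 1, 0)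
        - fderiv ℝ (fun q : V3 × ℝ => E q.1 q.2 1) (y, s) (EuclideanSpace.single 2 1, 0)
      = -(1 / b s) * fderiv ℝ (fun q : V3 × ℝ => B q.1 q.2 0) (y, s) (0, 1) := by
    intro y s
    have h := congrArg (fun w : V3 => w 0) (hcurlE y s)
    simp only [curl3, WithLp.equiv_symm_apply, PiLp.toLp_apply, Matrix.cons_val_zero, PiLp.smul_apply,
      smul_eq_mul] at h
    rw [pdE 2 1 y s, pdE 1 2 y s, hderB y s 0] at h
    linarith [h]
  have HE1 : ∀ (y : V3) (s : ℝ),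
      fderiv ℝ (fun q : V3 × ℝ => E q.1 q.2 0) (y, s) (EuclideanSpace.single 2 1, 0)
        - fderiv ℝ (fun q : V3 × ℝ => E q.1 q.2 2) (y, s) (EuclideanSpace.single 0 1, 0)
      = -(1 / b s) * fderiv ℝ (fun q : V3 × ℝ => B q.1 q.2 1) (y, s) (0, 1) := by
    intro y s
    have h := congrArg (fun w : V3 => w 1) (hcurlE y s)
    simp only [curl3, WithLp.equiv_symm_apply, PiLp.toLp_apply, Matrix.cons_val_one, Matrix.head_cons, Matrix.cons_val_zero,
      PiLp.smul_apply, smul_eq_mul] at h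
    rw [pdE 0 2 y s, pdE 2 0 y s, hderB y s 1] at h
    linarith [h]
  have HE2 : ∀ (y : V3) (s : ℝ),
      fderiv ℝ (fun q : V3 × ℝ => E q.1 q.2 1) (y, s) (EuclideanSpace.single 0 1, 0)
        - fderiv ℝ (fun q : V3 × ℝ => E q.1 q.2 0) (y, s) (EuclideanSpace.single 1 1, 0)
      = -(1 / b s) * fderiv ℝ (fun q : V3 × ℝ => B q.1 q.2 2) (y, s) (0, 1) := by
    intro y s
    have h := congrArg (fun w : V3 => w 2) (hcurlE y s)
    simp only [curl3, WithLp.equiv_symm_apply, PiLp.toLp_apply, Matrix.cons_val_two, Matrix.tail_cons,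
      Matrix.head_cons, PiLp.smul_apply, smul_eq_mul] at h
    rw [pdE 1 0 y s, pdE 0 1 y s, hderB y s 2] at h
    linarith [h]
  -- curl B components
  have HB0 : ∀ (y : V3) (s : ℝ),
      fderiv ℝ (fun q : V3 × ℝ => B q.1 q.2 2) (y, s) (EuclideanSpace.single 1 1, 0)
        - fderiv ℝ (fun q : V3 × ℝ => B q.1 q.2 1) (y, s) (EuclideanSpace.single 2 1, 0)
      = (1 / b s) * (fderiv ℝ (fun q : V3 × ℝ => E q.1 q.2 0) (y, s) (0, 1)
          + 4 * Real.pi * (ρ y s * u s 0)) := by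
    intro y s
    have h := congrArg (fun w : V3 => w 0) (hcurlB y s)
    simp only [curl3, WithLp.equiv_symm_apply, PiLp.toLp_apply, Matrix.cons_val_zero, PiLp.smul_apply,
      PiLp.add_apply, smul_eq_mul] at h
    rw [pdB 2 1 y s, pdB 1 2 y s, hderE y s 0] at h
    linear_combination h
  have HB1 : ∀ (y : V3) (s : ℝ),
      fderiv ℝ (fun q : V3 × ℝ => B q.1 q.2 0) (y, s) (EuclideanSpace.single 2 1, 0)
        - fderiv ℝ (fun q : V3 × ℝ => B q.1 q.2 2) (y, s) (EuclideanSpace.single 0 1, 0)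
      = (1 / b s) * (fderiv ℝ (fun q : V3 × ℝ => E q.1 q.2 1) (y, s) (0, 1)
          + 4 * Real.pi * (ρ y s * u s 1)) := by
    intro y s
    have h := congrArg (fun w : V3 => w 1) (hcurlB y s)
    simp only [curl3, WithLp.equiv_symm_apply, PiLp.toLp_apply, Matrix.cons_val_one, Matrix.head_cons, Matrix.cons_val_zero,
      PiLp.smul_apply, PiLp.add_apply, smul_eq_mul] at h
    rw [pdB 0 2 y s, pdB 2 0 y s, hderE y s 1] at h
    linear_combination h
  have HB2 : ∀ (y : V3) (s : ℝ),
      fderiv ℝ (fun q : V3 × ℝ => B q.1 q.2 1) (y, s) (EuclideanSpace.single 0 1, 0)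
        - fderiv ℝ (fun q : V3 × ℝ => B q.1 q.2 0) (y, s) (EuclideanSpace.single 1 1, 0)
      = (1 / b s) * (fderiv ℝ (fun q : V3 × ℝ => E q.1 q.2 2) (y, s) (0, 1)
          + 4 * Real.pi * (ρ y s * u s 2)) := by
    intro y s
    have h := congrArg (fun w : V3 => w 2) (hcurlB y s)
    simp only [curl3, WithLp.equiv_symm_apply, PiLp.toLp_apply, Matrix.cons_val_two, Matrix.tail_cons,
      Matrix.head_cons, PiLp.smul_apply, PiLp.add_apply, smul_eq_mul] at h
    rw [pdB 1 0 y s, pdB 0 1 y s, hderE y s 2] at h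
    linear_combination h
  -- divergence of B
  have Hdiv : ∀ (y : V3) (s : ℝ),
      fderiv ℝ (fun q : V3 × ℝ => B q.1 q.2 0) (y, s) (EuclideanSpace.single 0 1, 0)
        + fderiv ℝ (fun q : V3 × ℝ => B q.1 q.2 1) (y, s) (EuclideanSpace.single 1 1, 0)
        + fderiv ℝ (fun q : V3 × ℝ => B q.1 q.2 2) (y, s) (EuclideanSpace.single 2 1, 0) = 0 := by
    intro y s
    have h := hdivB y s
    simp only [div3, Fin.sum_univ_three] at h
    rw [pdB 0 0 y s, pdB 1 1 y s, pdB 2 2 y s] at h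
    exact h
  -- the three component identities, via the master lemma
  have M0 := master b hb hbdiff (EuclideanSpace.single 0 1, 0) (EuclideanSpace.single 1 1, 0)
    (EuclideanSpace.single 2 1, 0) (0, 1) rfl rfl rfl
    (fun q : V3 × ℝ => B q.1 q.2 0) (fun q => B q.1 q.2 1) (fun q => B q.1 q.2 2)
    (fun q => E q.1 q.2 1) (fun q => E q.1 q.2 2)
    (fun q => ρ q.1 q.2 * u q.2 1) (fun q => ρ q.1 q.2 * u q.2 2)
    (hBc 0) (hBc 1) (hBc 2) (hEc 1) (hEc 2) (hGc 1) (hGc 2)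
    (fun p => HE0 p.1 p.2) (fun p => HB2 p.1 p.2) (fun p => HB1 p.1 p.2)
    (fun p => Hdiv p.1 p.2) (x, τ)
  have M1 := master b hb hbdiff (EuclideanSpace.single 1 1, 0) (EuclideanSpace.single 2 1, 0)
    (EuclideanSpace.single 0 1, 0) (0, 1) rfl rfl rfl
    (fun q : V3 × ℝ => B q.1 q.2 1) (fun q => B q.1 q.2 2) (fun q => B q.1 q.2 0)
    (fun q => E q.1 q.2 2) (fun q => E q.1 q.2 0)
    (fun q => ρ q.1 q.2 * u q.2 2) (fun q => ρ q.1 q.2 * u q.2 0)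
    (hBc 1) (hBc 2) (hBc 0) (hEc 2) (hEc 0) (hGc 2) (hGc 0)
    (fun p => HE1 p.1 p.2) (fun p => HB0 p.1 p.2) (fun p => HB2 p.1 p.2)
    (fun p => by
      have h := Hdiv p.1 p.2
      linarith [h]) (x, τ)
  have M2 := master b hb hbdiff (EuclideanSpace.single 2 1, 0) (EuclideanSpace.single 0 1, 0)
    (EuclideanSpace.single 1 1, 0) (0, 1) rfl rfl rfl
    (fun q : V3 × ℝ => B q.1 q.2 2) (fun q => B q.1 q.2 0) (fun q => B q.1 q.2 1)
    (fun q => E q.1 q.2 0) (fun q => E q.1 q.2 1)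
    (fun q => ρ q.1 q.2 * u q.2 0) (fun q => ρ q.1 q.2 * u q.2 1)
    (hBc 2) (hBc 0) (hBc 1) (hEc 0) (hEc 1) (hGc 0) (hGc 1)
    (fun p => HE2 p.1 p.2) (fun p => HB1 p.1 p.2) (fun p => HB0 p.1 p.2)
    (fun p => by
      have h := Hdiv p.1 p.2
      linarith [h]) (x, τ)
  simp only at M0 M1 M2
  -- assemble the vector identity componentwise
  ext i
  have hc0 : ((1 / (b τ) ^ 2) • deriv (fun s => deriv (fun s' => B x s') s) τ
      - (deriv b τ / (b τ) ^ 3) • deriv (fun s => B x s) τ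
      - vlap3 (fun y => B y τ) x) 0
      = ((4 * Real.pi / b τ) • curl3 (fun y => ρ y τ • u τ) x) 0 := by
    simp only [PiLp.sub_apply, PiLp.smul_apply, smul_eq_mul, vlap3, curl3,
      WithLp.equiv_symm_apply, PiLp.toLp_apply, Fin.sum_univ_three, Matrix.cons_val_zero]
    rw [hder2 0, hderB x τ 0, pd2B 0 0, pd2B 0 1, pd2B 0 2, pdG 2 1 x, pdG 1 2 x]
    linarith [M0]
  have hc1 : ((1 / (b τ) ^ 2) • deriv (fun s => deriv (fun s' => B x s') s) τ
      - (deriv b τ / (b τ) ^ 3) • deriv (fun s => B x s) τ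
      - vlap3 (fun y => B y τ) x) 1
      = ((4 * Real.pi / b τ) • curl3 (fun y => ρ y τ • u τ) x) 1 := by
    simp only [PiLp.sub_apply, PiLp.smul_apply, smul_eq_mul, vlap3, curl3,
      WithLp.equiv_symm_apply, PiLp.toLp_apply, Fin.sum_univ_three, Matrix.cons_val_one, Matrix.head_cons, Matrix.cons_val_zero]
    rw [hder2 1, hderB x τ 1, pd2B 1 0, pd2B 1 1, pd2B 1 2, pdG 0 2 x, pdG 2 0 x]
    linarith [M1]
  have hc2 : ((1 / (b τ) ^ 2) • deriv (fun s => deriv (fun s' => B x s') s) τ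
      - (deriv b τ / (b τ) ^ 3) • deriv (fun s => B x s) τ
      - vlap3 (fun y => B y τ) x) 2
      = ((4 * Real.pi / b τ) • curl3 (fun y => ρ y τ • u τ) x) 2 := by
    simp only [PiLp.sub_apply, PiLp.smul_apply, smul_eq_mul, vlap3, curl3,
      WithLp.equiv_symm_apply, PiLp.toLp_apply, Fin.sum_univ_three, Matrix.cons_val_two, Matrix.tail_cons,
      Matrix.head_cons]
    rw [hder2 2, hderB x τ 2, pd2B 2 0, pd2B 2 1, pd2B 2 2, pdG 1 0 x, pdG 0 1 x]
    linarith [M2]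
  fin_cases i
  · exact hc0
  · exact hc1
  · exact hc2


end
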